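/- arXiv:2403.17348 — 7 statements merged into one kernel-verified Lean document; each statement's English description precedes it below -/
import Mathlib

section
/- Let d ≥ 1 and let s > -1/2 be a real number. Let U, V, Ũ, Ṽ be orthogonal d×d real matrices and let σ, σ̃ ∈ ℝ^d have nonnegative entries. Set A := U·diag(σ)·Vᵀ, C := Ũ·diag(σ̃)·Ṽᵀ, S_s(A) := U·diag(σ_1^{2s+1},…,σ_d^{2s+1})·Vᵀ and S_s(C) := Ũ·diag(σ̃_1^{2s+1},…,σ̃_d^{2s+1})·Ṽᵀ. Then (S_s(A) − S_s(C)) : (A − C) ≥ 0, i.e. the matrix function S_s(A) = (A Aᵀ)^s A is monotone with respect to the Frobenius inner product. -/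
/-!
Write `P := Uᵀ Ũ`, `Q := Vᵀ Ṽ` and `f x := x ^ (2s+1)`, which is nonnegative and monotone on
`[0, ∞)`. Expanding in the two singular bases,
`(S_s(A) − S_s(C)) : (A − C) = ∑ f(σᵢ)σᵢ + ∑ f(σ̃ⱼ)σ̃ⱼ − ∑ᵢⱼ (f(σᵢ)σ̃ⱼ + σᵢf(σ̃ⱼ)) Pᵢⱼ Qᵢⱼ`.
The matrix `Mᵢⱼ := (Pᵢⱼ² + Qᵢⱼ²)/2` is doubly stochastic and dominates `Pᵢⱼ Qᵢⱼ`, so the first two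
sums equal `∑ᵢⱼ (f(σᵢ)σᵢ + f(σ̃ⱼ)σ̃ⱼ) Mᵢⱼ`, and the rearrangement inequality
`f(a)b + af(b) ≤ f(a)a + f(b)b` bounds the cross sum termwise.
-/

open Matrix Finset

section FrobeniusInner

variable {R m n k : Type*} [CommRing R]

lemma mul_diagonal_mul_transpose_apply [Fintype k] [DecidableEq k] (W : Matrix m k R)
    (X : Matrix n k R) (α : k → R) (a : m) (b : n) :
    (W * diagonal α * Xᵀ) a b = ∑ i, W a i * α i * X b i := by
  rw [mul_apply]
  simp only [mul_diagonal, transpose_apply]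

variable [Fintype m] [Fintype n]

def frobeniusInner (A B : Matrix m n R) : R :=
  ∑ i, ∑ j, A i j * B i j

lemma frobeniusInner_comm (A B : Matrix m n R) : frobeniusInner A B = frobeniusInner B A := by
  simp only [frobeniusInner, mul_comm]

lemma frobeniusInner_sub_left (A B C : Matrix m n R) :
    frobeniusInner (A - B) C = frobeniusInner A C - frobeniusInner B C := by
  simp only [frobeniusInner, Matrix.sub_apply, sub_mul, sum_sub_distrib]

lemma frobeniusInner_sub_right (A B C : Matrix m n R) :
    frobeniusInner A (B - C) = frobeniusInner A B - frobeniusInner A C := by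
  simp only [frobeniusInner, Matrix.sub_apply, mul_sub, sum_sub_distrib]

variable [Fintype k] [DecidableEq k]

lemma frobeniusInner_mul_diagonal_mul_transpose (W W' : Matrix m k R) (X X' : Matrix n k R)
    (α β : k → R) :
    frobeniusInner (W * diagonal α * Xᵀ) (W' * diagonal β * X'ᵀ)
      = ∑ i, ∑ j, α i * β j * ((Wᵀ * W') i j * (Xᵀ * X') i j) := by
  simp only [frobeniusInner, mul_diagonal_mul_transpose_apply]
  simp only [mul_apply, transpose_apply, sum_mul_sum]
  simp_rw [mul_sum, sum_comm (s := (univ : Finset n)) (t := (univ : Finset k)),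
    sum_comm (s := (univ : Finset m)) (t := (univ : Finset k))]
  exact sum_congr rfl fun i _ => sum_congr rfl fun j _ => sum_congr rfl fun a _ =>
    sum_congr rfl fun b _ => by ring

lemma frobeniusInner_mul_diagonal_mul_transpose_of_orthogonal {W : Matrix m k R}
    {X : Matrix n k R} (hW : Wᵀ * W = 1) (hX : Xᵀ * X = 1) (α β : k → R) :
    frobeniusInner (W * diagonal α * Xᵀ) (W * diagonal β * Xᵀ) = ∑ i, α i * β i := by
  rw [frobeniusInner_mul_diagonal_mul_transpose, hW, hX]
  simp [one_apply]

end FrobeniusInner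

lemma MonotoneOn.mul_add_mul_le {R : Type*} [CommRing R] [LinearOrder R] [IsStrictOrderedRing R]
    {f : R → R} {s : Set R} (hf : MonotoneOn f s) {a b : R} (ha : a ∈ s) (hb : b ∈ s) :
    f a * b + a * f b ≤ f a * a + f b * b := by
  rcases le_total a b with hab | hba
  · nlinarith [hf ha hb hab]
  · nlinarith [hf hb ha hba]

section DoublyStochastic

variable {R n : Type*} [Fintype n] [DecidableEq n]

lemma orthogonal_transpose_mul [CommRing R] {U U' : Matrix n n R} (hU : Uᵀ * U = 1)
    (hU' : U'ᵀ * U' = 1) : (Uᵀ * U')ᵀ * (Uᵀ * U') = 1 := by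
  rw [transpose_mul, transpose_transpose, mul_assoc, ← mul_assoc U, mul_eq_one_comm.mp hU,
    one_mul, hU']

lemma sum_sum_add_mul_of_mem_doublyStochastic [Semiring R] [PartialOrder R] [IsOrderedRing R]
    {M : Matrix n n R} (hM : M ∈ doublyStochastic R n) (x y : n → R) :
    ∑ i, ∑ j, (x i + y j) * M i j = ∑ i, x i + ∑ j, y j := by
  simp only [add_mul, sum_add_distrib, ← mul_sum, sum_row_of_mem_doublyStochastic hM, mul_one]
  rw [sum_comm]
  simp only [← mul_sum, sum_col_of_mem_doublyStochastic hM, mul_one]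

lemma hadamard_self_mem_doublyStochastic [CommRing R] [LinearOrder R] [IsStrictOrderedRing R]
    {P : Matrix n n R} (hP : Pᵀ * P = 1) : P ⊙ P ∈ doublyStochastic R n := by
  have hP' : P * Pᵀ = 1 := mul_eq_one_comm.mp hP
  refine mem_doublyStochastic_iff_sum.mpr ⟨fun i j => mul_self_nonneg _, fun i => ?_, fun j => ?_⟩
  · simpa [mul_apply] using congrArg (· i i) hP'
  · simpa [mul_apply] using congrArg (· j j) hP

end DoublyStochastic

section Monotone

variable {R n : Type*} [Field R] [LinearOrder R] [IsStrictOrderedRing R] [Fintype n]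
  [DecidableEq n] {f : R → R}

lemma sum_sum_mul_apply_mul_apply_le (hf : MonotoneOn f (Set.Ici 0))
    (hf₀ : ∀ x, 0 ≤ x → 0 ≤ f x) {a b : n → R} (ha : ∀ i, 0 ≤ a i) (hb : ∀ j, 0 ≤ b j)
    {P Q : Matrix n n R} (hP : Pᵀ * P = 1) (hQ : Qᵀ * Q = 1) :
    ∑ i, ∑ j, (f (a i) * b j + a i * f (b j)) * (P i j * Q i j)
      ≤ ∑ i, f (a i) * a i + ∑ j, f (b j) * b j := by
  set M : Matrix n n R := (1 / 2 : R) • (P ⊙ P) + (1 / 2 : R) • (Q ⊙ Q)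
  have hM : M ∈ doublyStochastic R n :=
    convex_doublyStochastic (hadamard_self_mem_doublyStochastic hP)
      (hadamard_self_mem_doublyStochastic hQ) (by norm_num) (by norm_num) (by norm_num)
  rw [← sum_sum_add_mul_of_mem_doublyStochastic hM]
  refine sum_le_sum fun i _ => sum_le_sum fun j _ => ?_
  have hcross : 0 ≤ f (a i) * b j + a i * f (b j) :=
    add_nonneg (mul_nonneg (hf₀ _ (ha i)) (hb j)) (mul_nonneg (ha i) (hf₀ _ (hb j)))
  have hPQ : P i j * Q i j ≤ M i j := by
    simp only [M, Matrix.add_apply, Matrix.smul_apply, hadamard_apply, smul_eq_mul]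
    nlinarith [sq_nonneg (P i j - Q i j)]
  calc (f (a i) * b j + a i * f (b j)) * (P i j * Q i j)
      ≤ (f (a i) * b j + a i * f (b j)) * M i j := mul_le_mul_of_nonneg_left hPQ hcross
    _ ≤ (f (a i) * a i + f (b j) * b j) * M i j :=
      mul_le_mul_of_nonneg_right (hf.mul_add_mul_le (ha i) (hb j))
        (nonneg_of_mem_doublyStochastic hM)

theorem frobeniusInner_sub_mul_diagonal_mul_transpose_nonneg (hf : MonotoneOn f (Set.Ici 0))
    (hf₀ : ∀ x, 0 ≤ x → 0 ≤ f x) {U V U' V' : Matrix n n R} (hU : Uᵀ * U = 1)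
    (hV : Vᵀ * V = 1) (hU' : U'ᵀ * U' = 1) (hV' : V'ᵀ * V' = 1) {σ σ' : n → R}
    (hσ : ∀ j, 0 ≤ σ j) (hσ' : ∀ j, 0 ≤ σ' j) :
    0 ≤ frobeniusInner
      (U * diagonal (fun j => f (σ j)) * Vᵀ - U' * diagonal (fun j => f (σ' j)) * V'ᵀ)
      (U * diagonal σ * Vᵀ - U' * diagonal σ' * V'ᵀ) := by
  have key := sum_sum_mul_apply_mul_apply_le hf hf₀ hσ hσ'
    (orthogonal_transpose_mul hU hU') (orthogonal_transpose_mul hV hV')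
  simp only [add_mul, sum_add_distrib] at key
  rw [frobeniusInner_sub_left, frobeniusInner_sub_right, frobeniusInner_sub_right,
    frobeniusInner_comm (U' * _ * _) (U * _ * _),
    frobeniusInner_mul_diagonal_mul_transpose_of_orthogonal hU hV,
    frobeniusInner_mul_diagonal_mul_transpose_of_orthogonal hU' hV',
    frobeniusInner_mul_diagonal_mul_transpose, frobeniusInner_mul_diagonal_mul_transpose]
  linarith

end Monotone

theorem monotone_Ss_general
    (d : ℕ) (s : ℝ) (hs : -1/2 < s)
    (U V U' V' : Matrix (Fin d) (Fin d) ℝ)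
    (hU : Uᵀ * U = 1) (hV : Vᵀ * V = 1) (hU' : U'ᵀ * U' = 1) (hV' : V'ᵀ * V' = 1)
    (σ σ' : Fin d → ℝ) (hσ : ∀ j, 0 ≤ σ j) (hσ' : ∀ j, 0 ≤ σ' j)
    (A C SsA SsC : Matrix (Fin d) (Fin d) ℝ)
    (hA : A = U * Matrix.diagonal σ * Vᵀ)
    (hC : C = U' * Matrix.diagonal σ' * V'ᵀ)
    (hSsA : SsA = U * Matrix.diagonal (fun j => σ j ^ (2*s+1)) * Vᵀ)
    (hSsC : SsC = U' * Matrix.diagonal (fun j => σ' j ^ (2*s+1)) * V'ᵀ) :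
    0 ≤ ∑ i, ∑ j, (SsA - SsC) i j * (A - C) i j := by
  subst hA hC hSsA hSsC
  have hexp : 0 ≤ 2 * s + 1 := by linarith
  exact frobeniusInner_sub_mul_diagonal_mul_transpose_nonneg (f := (· ^ (2 * s + 1)))
    (fun _ hx _ _ hxy => Real.rpow_le_rpow hx hxy hexp) (fun _ hx => Real.rpow_nonneg hx _)
    hU hV hU' hV' hσ hσ'

/-- Monotonicity of the matrix function `S_s(A) = (A Aᵀ)^s A`, expressed via singular
value decompositions: `(S_s(A) − S_s(C)) : (A − C) ≥ 0` for the Frobenius inner product. -/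
theorem monotone_Ss
    (d : ℕ) (hd : 1 ≤ d) (s : ℝ) (hs : -1/2 < s)
    (U V U' V' : Matrix (Fin d) (Fin d) ℝ)
    (hU : Uᵀ * U = 1) (hV : Vᵀ * V = 1) (hU' : U'ᵀ * U' = 1) (hV' : V'ᵀ * V' = 1)
    (σ σ' : Fin d → ℝ) (hσ : ∀ j, 0 ≤ σ j) (hσ' : ∀ j, 0 ≤ σ' j)
    (A C SsA SsC : Matrix (Fin d) (Fin d) ℝ)
    (hA : A = U * Matrix.diagonal σ * Vᵀ)
    (hC : C = U' * Matrix.diagonal σ' * V'ᵀ)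
    (hSsA : SsA = U * Matrix.diagonal (fun j => σ j ^ (2*s+1)) * Vᵀ)
    (hSsC : SsC = U' * Matrix.diagonal (fun j => σ' j ^ (2*s+1)) * V'ᵀ) :
    0 ≤ ∑ i, ∑ j, (SsA - SsC) i j * (A - C) i j :=
  monotone_Ss_general d s hs U V U' V' hU hV hU' hV' σ σ' hσ hσ' A C SsA SsC hA hC hSsA hSsC
end

section
/- Let d ≥ 1, let s ≥ 0 be a real number and let ε > 0. Set c := max( ε^{−s}, (2s+1)·((2s+1)/(ε(2s+3)))^s ). Let U, V, Ũ, Ṽ be orthogonal d×d real matrices and let σ, σ̃ ∈ ℝ^d have nonnegative entries. Set A := U·diag(σ)·Vᵀ, C := Ũ·diag(σ̃)·Ṽᵀ, and for r ∈ {s, s+1} set S_r(A) := U·diag(σ_1^{2r+1},…,σ_d^{2r+1})·Vᵀ and S_r(C) := Ũ·diag(σ̃_1^{2r+1},…,σ̃_d^{2r+1})·Ṽᵀ. Then (S_s(A) − S_s(C)) : (A − C) ≤ ε·(S_{s+1}(A) − S_{s+1}(C)) : (A − C) + c·|A − C|². -/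
open Matrix BigOperators

lemma pt_lemma (s α β c : ℝ) (hs : 0 ≤ s) (hα : 0 ≤ α) (hβ : 0 < β)
    (hc : α * (α/β) ^ s ≤ c) (t : ℝ) (ht : 0 ≤ t) :
    α * t ^ (2*s) ≤ β * t ^ (2*s+2) + c := by
  have hc0 : 0 ≤ c := le_trans (by positivity) hc
  have h2s : t ^ (2*s) = (t ^ (2:ℝ)) ^ s := by
    rw [← Real.rpow_mul ht]
  rcases le_or_gt (t ^ (2:ℝ)) (α/β) with h | h
  · have h1 : α * t ^ (2*s) ≤ α * (α/β) ^ s := by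
      apply mul_le_mul_of_nonneg_left _ hα
      rw [h2s]
      exact Real.rpow_le_rpow (Real.rpow_nonneg ht 2) h hs
    have h3 : 0 ≤ β * t ^ (2*s+2) := by positivity
    linarith
  · have ht0 : 0 < t := by
      rcases eq_or_lt_of_le ht with h0 | h0
      · exfalso; rw [← h0] at h
        simp [Real.zero_rpow (by norm_num : (2:ℝ) ≠ 0)] at h
        have : 0 ≤ α/β := by positivity
        linarith
      · exact h0
    have hsplit : t ^ (2*s+2) = t ^ (2*s) * t ^ (2:ℝ) := by
      rw [← Real.rpow_add ht0]
    have htp : 0 < t ^ (2*s) := Real.rpow_pos_of_pos ht0 _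
    have : α < β * t ^ (2:ℝ) := by
      have := (div_lt_iff₀ hβ).mp h
      linarith [this]
    nlinarith [Real.rpow_nonneg ht (2:ℝ)]

lemma phi_mono (s ε c : ℝ) (hs : 0 ≤ s) (hε : 0 < ε)
    (hcB : (2*s+1) * ((2*s+1)/(ε*(2*s+3))) ^ s ≤ c) :
    MonotoneOn (fun t : ℝ => ε * t ^ (2*s+3) - t ^ (2*s+1) + c * t) (Set.Ici (0:ℝ)) := by
  have hD : ∀ t : ℝ, HasDerivAt (fun t : ℝ => ε * t ^ (2*s+3) - t ^ (2*s+1) + c * t)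
      (ε * ((2*s+3) * t ^ (2*s+2)) - (2*s+1) * t ^ (2*s) + c) t := by
    intro t
    have h1 : HasDerivAt (fun t : ℝ => t ^ (2*s+3)) ((2*s+3) * t ^ (2*s+2)) t := by
      have := Real.hasDerivAt_rpow_const (x := t) (p := 2*s+3) (Or.inr (by linarith))
      convert this using 2
      ring
    have h2 : HasDerivAt (fun t : ℝ => t ^ (2*s+1)) ((2*s+1) * t ^ (2*s)) t := by
      have := Real.hasDerivAt_rpow_const (x := t) (p := 2*s+1) (Or.inr (by linarith))
      convert this using 2
      ring
    have h3 : HasDerivAt (fun t : ℝ => c * t) c t := by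
      simpa using (hasDerivAt_id t).const_mul c
    exact ((h1.const_mul ε).sub h2).add h3
  apply monotoneOn_of_deriv_nonneg (convex_Ici 0)
  · exact fun t _ => (hD t).differentiableAt.continuousAt.continuousWithinAt
  · intro t _
    exact (hD t).differentiableAt.differentiableWithinAt
  · intro t htI
    rw [interior_Ici] at htI
    rw [(hD t).deriv]
    have := pt_lemma s (2*s+1) (ε*(2*s+3)) c hs (by linarith) (by nlinarith) hcB t (le_of_lt htI)
    nlinarith [this]

lemma scalar1 (s ε c : ℝ) (hs : 0 ≤ s) (hε : 0 < ε)
    (hcB : (2*s+1) * ((2*s+1)/(ε*(2*s+3))) ^ s ≤ c)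
    (x y : ℝ) (hx : 0 ≤ x) (hy : 0 ≤ y) :
    (x ^ (2*s+1) - y ^ (2*s+1)) * (x - y) ≤
      ε * ((x ^ (2*s+3) - y ^ (2*s+3)) * (x - y)) + c * (x - y)^2 := by
  have key : ∀ a b : ℝ, 0 ≤ a → 0 ≤ b → b ≤ a →
      (a ^ (2*s+1) - b ^ (2*s+1)) * (a - b) ≤
        ε * ((a ^ (2*s+3) - b ^ (2*s+3)) * (a - b)) + c * (a - b)^2 := by
    intro a b ha hb hba
    have hm := phi_mono s ε c hs hε hcB hb ha hba
    simp only at hm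
    have hab : 0 ≤ a - b := by linarith
    nlinarith [mul_le_mul_of_nonneg_right (sub_nonneg.mpr hm) hab]
  rcases le_total y x with h | h
  · exact key x y hx hy h
  · have := key y x hy hx h
    nlinarith [this]

lemma scalar2 (s ε c : ℝ) (hs : 0 ≤ s) (hε : 0 < ε)
    (hcA : ε ^ (-s) ≤ c)
    (x y : ℝ) (hx : 0 ≤ x) (hy : 0 ≤ y) :
    (x ^ (2*s+1) + y ^ (2*s+1)) * (x + y) ≤
      ε * ((x ^ (2*s+3) + y ^ (2*s+3)) * (x + y)) + c * (x + y)^2 := by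
  have hcA' : 1 * (1/ε) ^ s ≤ c := by
    rw [one_mul, one_div, Real.inv_rpow hε.le, ← Real.rpow_neg hε.le]
    exact hcA
  have pt1 : ∀ t : ℝ, 0 ≤ t → t ^ (2*s+1) ≤ ε * t ^ (2*s+3) + c * t := by
    intro t ht
    rcases eq_or_lt_of_le ht with h0 | h0
    · rw [← h0, Real.zero_rpow (by linarith : 2*s+1 ≠ 0),
        Real.zero_rpow (by linarith : 2*s+3 ≠ 0)]
      norm_num
    · have := pt_lemma s 1 ε c hs zero_le_one hε hcA' t ht
      have e1 : t ^ (2*s+1) = t ^ (2*s) * t := by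
        rw [Real.rpow_add_one (ne_of_gt h0)]
      have e2 : t ^ (2*s+3) = t ^ (2*s+2) * t := by
        rw [← Real.rpow_add_one (ne_of_gt h0)]; ring_nf
      nlinarith [this, h0]
  have h1 := pt1 x hx
  have h2 := pt1 y hy
  nlinarith [add_nonneg hx hy, sq_nonneg (x+y)]

lemma per_term (s ε c : ℝ) (hs : 0 ≤ s) (hε : 0 < ε)
    (hc1 : ε ^ (-s) ≤ c) (hc2 : (2*s+1) * ((2*s+1)/(ε*(2*s+3))) ^ s ≤ c)
    (a b x y : ℝ) (ha : 0 ≤ a) (hb : 0 ≤ b) (hx : 0 ≤ x) (hy : 0 ≤ y) :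
    a * ((x ^ (2*s+1) - y ^ (2*s+1)) * (x - y)) + b * ((x ^ (2*s+1) + y ^ (2*s+1)) * (x + y))
      ≤ ε * (a * ((x ^ (2*s+3) - y ^ (2*s+3)) * (x - y))
            + b * ((x ^ (2*s+3) + y ^ (2*s+3)) * (x + y)))
        + c * (a * ((x - y) * (x - y)) + b * ((x + y) * (x + y))) := by
  have h1 := scalar1 s ε c hs hε hc2 x y hx hy
  have h2 := scalar2 s ε c hs hε hc1 x y hx hy
  nlinarith [mul_le_mul_of_nonneg_left h1 ha, mul_le_mul_of_nonneg_left h2 hb]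

lemma sum_entry' {d : ℕ} (U1 V1 U2 V2 : Matrix (Fin d) (Fin d) ℝ) (α β : Fin d → ℝ) :
    ∑ i, ∑ j, (U1 * Matrix.diagonal α * V1ᵀ) i j * (U2 * Matrix.diagonal β * V2ᵀ) i j
      = ∑ k, ∑ l, α k * β l * ((U1ᵀ * U2) k l * (V1ᵀ * V2) k l) := by
  have entry : ∀ (P Q : Matrix (Fin d) (Fin d) ℝ) (γ : Fin d → ℝ) (i j : Fin d),
      (P * Matrix.diagonal γ * Qᵀ) i j = ∑ k, P i k * (γ k * Q j k) := by
    intro P Q γ i j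
    rw [Matrix.mul_assoc]
    simp [Matrix.mul_apply, Matrix.diagonal_apply, Matrix.transpose_apply, ite_mul,
      Finset.mul_sum, Finset.sum_ite_eq]
  calc ∑ i, ∑ j, (U1 * Matrix.diagonal α * V1ᵀ) i j * (U2 * Matrix.diagonal β * V2ᵀ) i j
      = ∑ i, ∑ j, ∑ k, ∑ l,
          α k * β l * ((U1 i k * U2 i l) * (V1 j k * V2 j l)) := by
        simp_rw [entry, Finset.sum_mul_sum]
        apply Finset.sum_congr rfl; intro i _
        apply Finset.sum_congr rfl; intro j _
        apply Finset.sum_congr rfl; intro k _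
        apply Finset.sum_congr rfl; intro l _
        ring
    _ = ∑ i, ∑ k, ∑ j, ∑ l,
          α k * β l * ((U1 i k * U2 i l) * (V1 j k * V2 j l)) :=
        Finset.sum_congr rfl fun i _ => Finset.sum_comm
    _ = ∑ k, ∑ i, ∑ j, ∑ l,
          α k * β l * ((U1 i k * U2 i l) * (V1 j k * V2 j l)) :=
        Finset.sum_comm
    _ = ∑ k, ∑ i, ∑ l, ∑ j,
          α k * β l * ((U1 i k * U2 i l) * (V1 j k * V2 j l)) :=
        Finset.sum_congr rfl fun k _ => Finset.sum_congr rfl fun i _ => Finset.sum_comm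
    _ = ∑ k, ∑ l, ∑ i, ∑ j,
          α k * β l * ((U1 i k * U2 i l) * (V1 j k * V2 j l)) :=
        Finset.sum_congr rfl fun k _ => Finset.sum_comm
    _ = ∑ k, ∑ l, ∑ j, ∑ i,
          α k * β l * ((U1 i k * U2 i l) * (V1 j k * V2 j l)) :=
        Finset.sum_congr rfl fun k _ => Finset.sum_congr rfl fun l _ => Finset.sum_comm
    _ = ∑ k, ∑ l, α k * β l * ((U1ᵀ * U2) k l * (V1ᵀ * V2) k l) := by
        simp only [Matrix.mul_apply, Matrix.transpose_apply, Finset.sum_mul_sum,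
          Finset.mul_sum, Finset.sum_mul]
        try ring

lemma expand_lemma {d : ℕ} (U V U' V' : Matrix (Fin d) (Fin d) ℝ)
    (hU : Uᵀ * U = 1) (hV : Vᵀ * V = 1) (hU' : U'ᵀ * U' = 1) (hV' : V'ᵀ * V' = 1)
    (α β τ τ' : Fin d → ℝ) :
    ∑ i, ∑ j, (U * Matrix.diagonal α * Vᵀ - U' * Matrix.diagonal β * V'ᵀ) i j *
      ((U * Matrix.diagonal τ * Vᵀ - U' * Matrix.diagonal τ' * V'ᵀ) i j)
    = (∑ j, α j * τ j + ∑ k, β k * τ' k)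
      - ∑ j, ∑ k, (α j * τ' k + τ j * β k) * ((Uᵀ * U') j k * (Vᵀ * V') j k) := by
  simp only [Matrix.sub_apply, sub_mul, mul_sub, Finset.sum_sub_distrib]
  rw [sum_entry' U V U V α τ, sum_entry' U V U' V' α τ', sum_entry' U' V' U V β τ,
    sum_entry' U' V' U' V' β τ']
  have horth : ∀ (γ δ : Fin d → ℝ),
      ∑ k, ∑ l, γ k * δ l * ((1 : Matrix (Fin d) (Fin d) ℝ) k l * (1 : Matrix (Fin d) (Fin d) ℝ) k l)
        = ∑ k, γ k * δ k := by
    intro γ δ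
    apply Finset.sum_congr rfl; intro k _
    simp [Matrix.one_apply, mul_ite, ite_mul, Finset.sum_ite_eq']
  have hU'U : U'ᵀ * U = (Uᵀ * U')ᵀ := by rw [Matrix.transpose_mul, Matrix.transpose_transpose]
  have hV'V : V'ᵀ * V = (Vᵀ * V')ᵀ := by rw [Matrix.transpose_mul, Matrix.transpose_transpose]
  rw [hU, hV, hU', hV', hU'U, hV'V, horth α τ, horth β τ']
  have hT3 : ∑ k, ∑ l, β k * τ l * ((Uᵀ*U')ᵀ k l * (Vᵀ*V')ᵀ k l)
      = ∑ j, ∑ k, τ j * β k * ((Uᵀ*U') j k * (Vᵀ*V') j k) := by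
    rw [Finset.sum_comm]
    apply Finset.sum_congr rfl; intro j _
    apply Finset.sum_congr rfl; intro k _
    simp only [Matrix.transpose_apply]
    ring
  rw [hT3]
  simp only [add_mul, Finset.sum_add_distrib]
  ring

lemma key_id {d : ℕ} (E F : Matrix (Fin d) (Fin d) ℝ)
    (hEr : ∀ j, ∑ k, E j k * E j k = 1) (hEc : ∀ k, ∑ j, E j k * E j k = 1)
    (hFr : ∀ j, ∑ k, F j k * F j k = 1) (hFc : ∀ k, ∑ j, F j k * F j k = 1)
    (p q p' q' : Fin d → ℝ) :
    (∑ j, p j * q j + ∑ k, p' k * q' k)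
      - ∑ j, ∑ k, (p j * q' k + q j * p' k) * (E j k * F j k)
    = ∑ j, ∑ k, ((E j k + F j k)^2/4 * ((p j - p' k) * (q j - q' k))
        + (E j k - F j k)^2/4 * ((p j + p' k) * (q j + q' k))) := by
  have step : ∀ j k, (E j k + F j k)^2/4 * ((p j - p' k) * (q j - q' k))
        + (E j k - F j k)^2/4 * ((p j + p' k) * (q j + q' k))
      = (E j k * E j k) * ((p j * q j)/2) + (E j k * E j k) * ((p' k * q' k)/2)
        + (F j k * F j k) * ((p j * q j)/2) + (F j k * F j k) * ((p' k * q' k)/2)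
        - (p j * q' k + q j * p' k) * (E j k * F j k) := by
    intro j k; ring
  simp only [step, Finset.sum_add_distrib, Finset.sum_sub_distrib]
  have hA : ∑ j, ∑ k, (E j k * E j k) * ((p j * q j)/2) = (∑ j, p j * q j)/2 := by
    rw [Finset.sum_div]
    apply Finset.sum_congr rfl; intro j _
    rw [← Finset.sum_mul, hEr j, one_mul]
  have hB : ∑ j, ∑ k, (E j k * E j k) * ((p' k * q' k)/2) = (∑ k, p' k * q' k)/2 := by
    rw [Finset.sum_comm, Finset.sum_div]
    apply Finset.sum_congr rfl; intro k _
    rw [← Finset.sum_mul, hEc k, one_mul]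
  have hC : ∑ j, ∑ k, (F j k * F j k) * ((p j * q j)/2) = (∑ j, p j * q j)/2 := by
    rw [Finset.sum_div]
    apply Finset.sum_congr rfl; intro j _
    rw [← Finset.sum_mul, hFr j, one_mul]
  have hD : ∑ j, ∑ k, (F j k * F j k) * ((p' k * q' k)/2) = (∑ k, p' k * q' k)/2 := by
    rw [Finset.sum_comm, Finset.sum_div]
    apply Finset.sum_congr rfl; intro k _
    rw [← Finset.sum_mul, hFc k, one_mul]
  rw [hA, hB, hC, hD]
  ring

/-- Interpolation estimate for the matrix function `S_s(A) = (A Aᵀ)^s A`: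
`(S_s(A) − S_s(C)) : (A − C) ≤ ε (S_{s+1}(A) − S_{s+1}(C)) : (A − C) + c |A − C|²`. -/
theorem interpolation_Ss
    (d : ℕ) (hd : 1 ≤ d) (s : ℝ) (hs : 0 ≤ s) (ε : ℝ) (hε : 0 < ε)
    (c : ℝ) (hc : c = max (ε ^ (-s)) ((2*s+1) * ((2*s+1)/(ε*(2*s+3))) ^ s))
    (U V U' V' : Matrix (Fin d) (Fin d) ℝ)
    (hU : Uᵀ * U = 1) (hV : Vᵀ * V = 1) (hU' : U'ᵀ * U' = 1) (hV' : V'ᵀ * V' = 1)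
    (σ σ' : Fin d → ℝ) (hσ : ∀ j, 0 ≤ σ j) (hσ' : ∀ j, 0 ≤ σ' j)
    (A C SsA SsC Ss1A Ss1C : Matrix (Fin d) (Fin d) ℝ)
    (hA : A = U * Matrix.diagonal σ * Vᵀ)
    (hC : C = U' * Matrix.diagonal σ' * V'ᵀ)
    (hSsA : SsA = U * Matrix.diagonal (fun j => σ j ^ (2*s+1)) * Vᵀ)
    (hSsC : SsC = U' * Matrix.diagonal (fun j => σ' j ^ (2*s+1)) * V'ᵀ)
    (hSs1A : Ss1A = U * Matrix.diagonal (fun j => σ j ^ (2*(s+1)+1)) * Vᵀ)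
    (hSs1C : Ss1C = U' * Matrix.diagonal (fun j => σ' j ^ (2*(s+1)+1)) * V'ᵀ) :
    ∑ i, ∑ j, (SsA - SsC) i j * (A - C) i j ≤
      ε * ∑ i, ∑ j, (Ss1A - Ss1C) i j * (A - C) i j
        + c * ∑ i, ∑ j, ((A - C) i j) ^ 2 := by
  have hc1 : ε ^ (-s) ≤ c := hc ▸ le_max_left _ _
  have hc2 : (2*s+1) * ((2*s+1)/(ε*(2*s+3))) ^ s ≤ c := hc ▸ le_max_right _ _
  have hexp : ∀ τ : Fin d → ℝ, (fun j => τ j ^ (2*(s+1)+1)) = fun j => τ j ^ (2*s+3) := by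
    intro τ; funext j; congr 1; ring
  subst hA hC hSsA hSsC hSs1A hSs1C
  rw [hexp σ, hexp σ']
  simp only [pow_two]
  rw [expand_lemma U V U' V' hU hV hU' hV' (fun j => σ j ^ (2*s+1)) (fun j => σ' j ^ (2*s+1)) σ σ',
    expand_lemma U V U' V' hU hV hU' hV' (fun j => σ j ^ (2*s+3)) (fun j => σ' j ^ (2*s+3)) σ σ',
    expand_lemma U V U' V' hU hV hU' hV' σ σ' σ σ']
  -- orthogonality of E = Uᵀ U' and F = Vᵀ V'
  have rowcol : ∀ (P P' : Matrix (Fin d) (Fin d) ℝ), Pᵀ * P = 1 → P'ᵀ * P' = 1 →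
      (∀ j, ∑ k, (Pᵀ * P') j k * (Pᵀ * P') j k = 1) ∧
      (∀ k, ∑ j, (Pᵀ * P') j k * (Pᵀ * P') j k = 1) := by
    intro P P' hP hP'
    have hP2 : P * Pᵀ = 1 := mul_eq_one_comm.mp hP
    have hP'2 : P' * P'ᵀ = 1 := mul_eq_one_comm.mp hP'
    constructor
    · intro j
      have h1 : (Pᵀ * P') * (Pᵀ * P')ᵀ = 1 := by
        rw [Matrix.transpose_mul, Matrix.transpose_transpose]
        calc Pᵀ * P' * (P'ᵀ * P) = Pᵀ * (P' * P'ᵀ) * P := by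
              rw [Matrix.mul_assoc, Matrix.mul_assoc, Matrix.mul_assoc]
          _ = 1 := by rw [hP'2, Matrix.mul_one, hP]
      have := congrFun (congrFun h1 j) j
      simpa [Matrix.mul_apply, Matrix.transpose_apply, Matrix.one_apply, mul_comm] using this
    · intro k
      have h1 : (Pᵀ * P')ᵀ * (Pᵀ * P') = 1 := by
        rw [Matrix.transpose_mul, Matrix.transpose_transpose]
        calc P'ᵀ * P * (Pᵀ * P') = P'ᵀ * (P * Pᵀ) * P' := by
              rw [Matrix.mul_assoc, Matrix.mul_assoc, Matrix.mul_assoc]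
          _ = 1 := by rw [hP2, Matrix.mul_one, hP']
      have := congrFun (congrFun h1 k) k
      simpa [Matrix.mul_apply, Matrix.transpose_apply, Matrix.one_apply, mul_comm] using this
  obtain ⟨hEr, hEc⟩ := rowcol U U' hU hU'
  obtain ⟨hFr, hFc⟩ := rowcol V V' hV hV'
  rw [key_id (Uᵀ * U') (Vᵀ * V') hEr hEc hFr hFc
      (fun j => σ j ^ (2*s+1)) σ (fun j => σ' j ^ (2*s+1)) σ',
    key_id (Uᵀ * U') (Vᵀ * V') hEr hEc hFr hFc
      (fun j => σ j ^ (2*s+3)) σ (fun j => σ' j ^ (2*s+3)) σ',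
    key_id (Uᵀ * U') (Vᵀ * V') hEr hEc hFr hFc σ σ σ' σ']
  have combine : ∀ (X Y : Fin d → Fin d → ℝ),
      ε * (∑ j, ∑ k, X j k) + c * (∑ j, ∑ k, Y j k)
        = ∑ j, ∑ k, (ε * X j k + c * Y j k) := by
    intro X Y
    simp [Finset.sum_add_distrib, Finset.mul_sum]
  rw [combine]
  apply Finset.sum_le_sum; intro j _
  apply Finset.sum_le_sum; intro k _
  have ha : (0:ℝ) ≤ ((Uᵀ * U') j k + (Vᵀ * V') j k)^2/4 := by positivity
  have hb : (0:ℝ) ≤ ((Uᵀ * U') j k - (Vᵀ * V') j k)^2/4 := by positivity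
  have := per_term s ε c hs hε hc1 hc2
    (((Uᵀ * U') j k + (Vᵀ * V') j k)^2/4) (((Uᵀ * U') j k - (Vᵀ * V') j k)^2/4)
    (σ j) (σ' k) ha hb (hσ j) (hσ' k)
  exact this
end

section
/- Let d ≥ 1 and let s > -1/2 be a real number. Let U, V, Ũ, Ṽ be orthogonal d×d real matrices and let σ, σ̃ ∈ ℝ^d have nonnegative entries. Set A := U·diag(σ)·Vᵀ, C := Ũ·diag(σ̃)·Ṽᵀ, S_s(A) := U·diag(σ_1^{2s+1},…,σ_d^{2s+1})·Vᵀ and S_s(C) := Ũ·diag(σ̃_1^{2s+1},…,σ̃_d^{2s+1})·Ṽᵀ. Then (S_s(A) − S_s(C)) : (A − C) = (1/2) Σ_{i,j=1}^d [ (σ_j^{2s+1} − σ̃_i^{2s+1})(σ_j − σ̃_i)·( ((ŨᵀU)_{ij})² + ((ṼᵀV)_{ij})² ) + (σ_j^{2s+1} σ̃_i + σ_j σ̃_i^{2s+1})·( (ŨᵀU)_{ij} − (ṼᵀV)_{ij} )² ]. -/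
/-!
With `P := Ũᵀ U` and `Q := Ṽᵀ V`, the Frobenius product of `U diag(a) Vᵀ` and `Ũ diag(b) Ṽᵀ`
is `∑ i j, b i * a j * P i j * Q i j`. Expanding `(S_s(A) - S_s(C)) : (A - C)` gives two such
cross terms and the two diagonal terms `∑ j, σ_j^{2s+1} σ_j` and `∑ i, σ̃_i^{2s+1} σ̃_i`. Since `P`
and `Q` are orthogonal, their rows and columns are unit vectors, so each diagonal term can be
spread as `∑ i j, σ_j^{2s+1} σ_j P i j ^ 2` (likewise with `Q`, and over rows for `σ̃`), after
which the identity holds termwise.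
-/

open Matrix

namespace Matrix

variable {R : Type*} [CommRing R] {n : Type*} [Fintype n] [DecidableEq n]

theorem sum_sum_mul_diagonal_mul_transpose {m k l p : Type*} [Fintype m] [Fintype k] [Fintype l]
    [Fintype p] [DecidableEq k] [DecidableEq l]
    (W : Matrix m k R) (a : k → R) (X : Matrix p k R)
    (Y : Matrix m l R) (b : l → R) (Z : Matrix p l R) :
    ∑ i, ∑ j, (W * diagonal a * Xᵀ) i j * (Y * diagonal b * Zᵀ) i j =
      ∑ i, ∑ j, b i * a j * (Yᵀ * W) i j * (Zᵀ * X) i j := by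
  simp only [mul_apply, diagonal_apply, mul_ite, mul_zero, Finset.sum_ite_eq',
    Finset.mem_univ, if_true, transpose_apply, Finset.sum_mul, Finset.mul_sum]
  simp only [Finset.sum_comm (γ := m) (α := l), Finset.sum_comm (γ := m) (α := k),
    Finset.sum_comm (γ := p) (α := l), Finset.sum_comm (γ := p) (α := k),
    Finset.sum_comm (γ := m) (α := p)]
  ac_rfl

theorem transpose_mul_transpose_mul_self {U U' : Matrix n n R} (hU : Uᵀ * U = 1)
    (hU' : U'ᵀ * U' = 1) : (U'ᵀ * U)ᵀ * (U'ᵀ * U) = 1 := by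
  rw [transpose_mul, transpose_transpose, Matrix.mul_assoc, ← Matrix.mul_assoc U',
    mul_eq_one_comm.mp hU', Matrix.one_mul, hU]

theorem sum_sum_mul_sq_of_transpose_mul_self {M : Matrix n n R} (hM : Mᵀ * M = 1) (c : n → R) :
    ∑ i, ∑ j, c j * M i j ^ 2 = ∑ j, c j := by
  rw [Finset.sum_comm]
  refine Finset.sum_congr rfl fun j _ => ?_
  have hj : ∑ i, M i j * M i j = 1 := by
    simpa only [mul_apply, transpose_apply, one_apply_eq] using congrFun (congrFun hM j) j
  rw [← Finset.mul_sum]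
  simp only [sq, hj, mul_one]

theorem sum_sum_mul_sq_of_mul_transpose_self {M : Matrix n n R} (hM : M * Mᵀ = 1) (c : n → R) :
    ∑ i, ∑ j, c i * M i j ^ 2 = ∑ i, c i := by
  rw [← sum_sum_mul_sq_of_transpose_mul_self (M := Mᵀ) (by rwa [transpose_transpose]) c,
    Finset.sum_comm]
  rfl

theorem two_mul_frobenius_inner_sub_svd {U V U' V' : Matrix n n R}
    (hU : Uᵀ * U = 1) (hV : Vᵀ * V = 1) (hU' : U'ᵀ * U' = 1) (hV' : V'ᵀ * V' = 1)
    (a σ a' σ' : n → R) :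
    2 * ∑ i, ∑ j, (U * diagonal a * Vᵀ - U' * diagonal a' * V'ᵀ) i j
        * (U * diagonal σ * Vᵀ - U' * diagonal σ' * V'ᵀ) i j =
      ∑ i, ∑ j,
        ((a j - a' i) * (σ j - σ' i) * ((U'ᵀ * U) i j ^ 2 + (V'ᵀ * V) i j ^ 2)
          + (a j * σ' i + σ j * a' i) * ((U'ᵀ * U) i j - (V'ᵀ * V) i j) ^ 2) := by
  set P := U'ᵀ * U
  set Q := V'ᵀ * V
  have hP : Pᵀ * P = 1 := transpose_mul_transpose_mul_self hU hU'
  have hQ : Qᵀ * Q = 1 := transpose_mul_transpose_mul_self hV hV'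
  have same_frame {W X : Matrix n n R} (hW : Wᵀ * W = 1) (hX : Xᵀ * X = 1) (b c : n → R) :
      ∑ i, ∑ j, (W * diagonal b * Xᵀ) i j * (W * diagonal c * Xᵀ) i j = ∑ i, b i * c i := by
    simp [sum_sum_mul_diagonal_mul_transpose, hW, hX, one_apply, mul_comm]
  have cross_swap : ∑ i, ∑ j, (U' * diagonal a' * V'ᵀ) i j * (U * diagonal σ * Vᵀ) i j =
      ∑ i, ∑ j, a' i * σ j * P i j * Q i j := by
    simp only [mul_comm ((U' * diagonal a' * V'ᵀ) _ _), sum_sum_mul_diagonal_mul_transpose]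
    rfl
  have lhs : ∑ i, ∑ j, (U * diagonal a * Vᵀ - U' * diagonal a' * V'ᵀ) i j
        * (U * diagonal σ * Vᵀ - U' * diagonal σ' * V'ᵀ) i j =
      ∑ i, a i * σ i + ∑ i, a' i * σ' i - ∑ i, ∑ j, σ' i * a j * P i j * Q i j
        - ∑ i, ∑ j, a' i * σ j * P i j * Q i j := by
    simp only [sub_apply, sub_mul, mul_sub, Finset.sum_sub_distrib, same_frame hU hV,
      same_frame hU' hV', cross_swap, sum_sum_mul_diagonal_mul_transpose]
    ring
  have rhs : ∑ i, ∑ j,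
        ((a j - a' i) * (σ j - σ' i) * (P i j ^ 2 + Q i j ^ 2)
          + (a j * σ' i + σ j * a' i) * (P i j - Q i j) ^ 2) =
      ∑ i, ∑ j, a j * σ j * P i j ^ 2 + ∑ i, ∑ j, a j * σ j * Q i j ^ 2
        + ∑ i, ∑ j, a' i * σ' i * P i j ^ 2 + ∑ i, ∑ j, a' i * σ' i * Q i j ^ 2
        - 2 * ∑ i, ∑ j, σ' i * a j * P i j * Q i j - 2 * ∑ i, ∑ j, a' i * σ j * P i j * Q i j := by
    simp only [Finset.mul_sum, ← Finset.sum_add_distrib, ← Finset.sum_sub_distrib]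
    exact Finset.sum_congr rfl fun i _ => Finset.sum_congr rfl fun j _ => by ring
  rw [lhs, rhs, sum_sum_mul_sq_of_transpose_mul_self hP (fun j => a j * σ j),
    sum_sum_mul_sq_of_transpose_mul_self hQ (fun j => a j * σ j),
    sum_sum_mul_sq_of_mul_transpose_self (mul_eq_one_comm.mp hP) (fun i => a' i * σ' i),
    sum_sum_mul_sq_of_mul_transpose_self (mul_eq_one_comm.mp hQ) (fun i => a' i * σ' i)]
  ring

end Matrix

theorem key_identity_Ss_general
    (d : ℕ) (s : ℝ)
    (U V U' V' : Matrix (Fin d) (Fin d) ℝ)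
    (hU : Uᵀ * U = 1) (hV : Vᵀ * V = 1) (hU' : U'ᵀ * U' = 1) (hV' : V'ᵀ * V' = 1)
    (σ σ' : Fin d → ℝ)
    (A C SsA SsC : Matrix (Fin d) (Fin d) ℝ)
    (hA : A = U * Matrix.diagonal σ * Vᵀ)
    (hC : C = U' * Matrix.diagonal σ' * V'ᵀ)
    (hSsA : SsA = U * Matrix.diagonal (fun j => σ j ^ (2*s+1)) * Vᵀ)
    (hSsC : SsC = U' * Matrix.diagonal (fun j => σ' j ^ (2*s+1)) * V'ᵀ) :
    ∑ i, ∑ j, (SsA - SsC) i j * (A - C) i j =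
      (1/2) * ∑ i, ∑ j,
        ((σ j ^ (2*s+1) - σ' i ^ (2*s+1)) * (σ j - σ' i)
            * (((U'ᵀ * U) i j) ^ 2 + ((V'ᵀ * V) i j) ^ 2)
          + (σ j ^ (2*s+1) * σ' i + σ j * σ' i ^ (2*s+1))
            * ((U'ᵀ * U) i j - (V'ᵀ * V) i j) ^ 2) := by
  subst hA hC hSsA hSsC
  rw [← two_mul_frobenius_inner_sub_svd hU hV hU' hV']
  ring

/-- The key algebraic identity for `(S_s(A) − S_s(C)) : (A − C)` in terms of
singular values and the orthogonal matrices of the singular value decompositions. -/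
theorem key_identity_Ss
    (d : ℕ) (hd : 1 ≤ d) (s : ℝ) (hs : -1/2 < s)
    (U V U' V' : Matrix (Fin d) (Fin d) ℝ)
    (hU : Uᵀ * U = 1) (hV : Vᵀ * V = 1) (hU' : U'ᵀ * U' = 1) (hV' : V'ᵀ * V' = 1)
    (σ σ' : Fin d → ℝ) (hσ : ∀ j, 0 ≤ σ j) (hσ' : ∀ j, 0 ≤ σ' j)
    (A C SsA SsC : Matrix (Fin d) (Fin d) ℝ)
    (hA : A = U * Matrix.diagonal σ * Vᵀ)
    (hC : C = U' * Matrix.diagonal σ' * V'ᵀ)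
    (hSsA : SsA = U * Matrix.diagonal (fun j => σ j ^ (2*s+1)) * Vᵀ)
    (hSsC : SsC = U' * Matrix.diagonal (fun j => σ' j ^ (2*s+1)) * V'ᵀ) :
    ∑ i, ∑ j, (SsA - SsC) i j * (A - C) i j =
      (1/2) * ∑ i, ∑ j,
        ((σ j ^ (2*s+1) - σ' i ^ (2*s+1)) * (σ j - σ' i)
            * (((U'ᵀ * U) i j) ^ 2 + ((V'ᵀ * V) i j) ^ 2)
          + (σ j ^ (2*s+1) * σ' i + σ j * σ' i ^ (2*s+1))
            * ((U'ᵀ * U) i j - (V'ᵀ * V) i j) ^ 2) :=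
  key_identity_Ss_general d s U V U' V' hU hV hU' hV' σ σ' A C SsA SsC hA hC hSsA hSsC
end

section
/- Let d ≥ 1, let P and Q be orthogonal d×d real matrices, let σ, σ̃ ∈ ℝ^d have nonnegative entries, and let p ≥ 0 be a real number. Then Σ_{j=1}^d (σ_j^{p+1} + σ̃_j^{p+1}) − Σ_{i,j=1}^d (σ_j^{p} σ̃_i + σ_j σ̃_i^{p})·P_{ij}·Q_{ij} = (1/2) Σ_{i,j=1}^d [ (σ_j^{p} − σ̃_i^{p})(σ_j − σ̃_i)·(P_{ij}² + Q_{ij}²) + (σ_j^{p} σ̃_i + σ_j σ̃_i^{p})·(P_{ij} − Q_{ij})² ]. -/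
open Matrix BigOperators

/-!
Entrywise, the summand on the right equals
`(σ_j^{p+1} + σ̃_i^{p+1}) (P_ij^2 + Q_ij^2) - 2 (σ_j^p σ̃_i + σ_j σ̃_i^p) P_ij Q_ij`,
because `x^{p+1} = x^p x` for every real `x` once `p + 1 ≠ 0`. Summing over `i` (resp. `j`) and
using that the columns (resp. rows) of `P` and `Q` are unit vectors turns the first part into
`2 Σ_j σ_j^{p+1} + 2 Σ_i σ̃_i^{p+1}`.
-/

namespace Matrix

variable {n R : Type*} [Fintype n] [DecidableEq n] [CommRing R]

theorem sum_sq_apply_col_eq_one {P : Matrix n n R} (hP : Pᵀ * P = 1) (j : n) :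
    ∑ i, P i j ^ 2 = 1 := by
  simpa [mul_apply, sq] using congrFun (congrFun hP j) j

theorem sum_sq_apply_row_eq_one {P : Matrix n n R} (hP : Pᵀ * P = 1) (i : n) :
    ∑ j, P i j ^ 2 = 1 :=
  sum_sq_apply_col_eq_one (P := Pᵀ) (by rw [transpose_transpose]; exact mul_eq_one_comm.mp hP) i

theorem sum_sum_mul_sq_apply_col {P : Matrix n n R} (hP : Pᵀ * P = 1) (a : n → R) :
    ∑ i, ∑ j, a j * P i j ^ 2 = ∑ j, a j := by
  rw [Finset.sum_comm]
  simp only [← Finset.mul_sum, sum_sq_apply_col_eq_one hP, mul_one]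

theorem sum_sum_mul_sq_apply_row {P : Matrix n n R} (hP : Pᵀ * P = 1) (b : n → R) :
    ∑ i, ∑ j, b i * P i j ^ 2 = ∑ i, b i := by
  simp only [← Finset.mul_sum, sum_sq_apply_row_eq_one hP, mul_one]

theorem sum_sum_weighted_sq_sub_eq {P Q : Matrix n n R} (hP : Pᵀ * P = 1) (hQ : Qᵀ * Q = 1)
    (f s g t : n → R) :
    ∑ i, ∑ j, ((f j - g i) * (s j - t i) * (P i j ^ 2 + Q i j ^ 2)
        + (f j * t i + s j * g i) * (P i j - Q i j) ^ 2) =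
      2 * (∑ j, f j * s j + ∑ i, g i * t i)
        - 2 * ∑ i, ∑ j, (f j * t i + s j * g i) * P i j * Q i j := by
  have entry : ∀ i j, (f j - g i) * (s j - t i) * (P i j ^ 2 + Q i j ^ 2)
      + (f j * t i + s j * g i) * (P i j - Q i j) ^ 2 =
        f j * s j * P i j ^ 2 + f j * s j * Q i j ^ 2 + g i * t i * P i j ^ 2
          + g i * t i * Q i j ^ 2 - 2 * ((f j * t i + s j * g i) * P i j * Q i j) := by
    intro i j
    ring
  simp only [entry, Finset.sum_sub_distrib, Finset.sum_add_distrib]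
  rw [sum_sum_mul_sq_apply_col hP, sum_sum_mul_sq_apply_col hQ, sum_sum_mul_sq_apply_row hP,
    sum_sum_mul_sq_apply_row hQ]
  simp only [← Finset.mul_sum]
  ring

end Matrix

theorem Real.rpow_add_one_of_add_one_ne_zero (x : ℝ) {y : ℝ} (hy : y + 1 ≠ 0) :
    x ^ (y + 1) = x ^ y * x := by
  rcases eq_or_ne x 0 with rfl | hx
  · rw [Real.zero_rpow hy, mul_zero]
  · exact Real.rpow_add_one hx y

theorem orthogonal_sum_identity_general
    (d : ℕ)
    (P Q : Matrix (Fin d) (Fin d) ℝ)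
    (hP : Pᵀ * P = 1) (hQ : Qᵀ * Q = 1)
    (σ σ' : Fin d → ℝ)
    (p : ℝ) (hp : 0 ≤ p) :
    (∑ j, (σ j ^ (p+1) + σ' j ^ (p+1)))
      - ∑ i, ∑ j, (σ j ^ p * σ' i + σ j * σ' i ^ p) * P i j * Q i j =
    (1/2) * ∑ i, ∑ j,
      ((σ j ^ p - σ' i ^ p) * (σ j - σ' i) * ((P i j) ^ 2 + (Q i j) ^ 2)
        + (σ j ^ p * σ' i + σ j * σ' i ^ p) * (P i j - Q i j) ^ 2) := by
  have hp1 : p + 1 ≠ 0 := by linarith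
  simp only [Real.rpow_add_one_of_add_one_ne_zero _ hp1]
  rw [Finset.sum_add_distrib]
  linear_combination (-1 / 2 : ℝ) * Matrix.sum_sum_weighted_sq_sub_eq hP hQ
    (fun j => σ j ^ p) σ (fun i => σ' i ^ p) σ'

/-- Algebraic rearrangement identity behind the monotonicity computation,
using that the rows and columns of orthogonal matrices are unit vectors. -/
theorem orthogonal_sum_identity
    (d : ℕ) (hd : 1 ≤ d)
    (P Q : Matrix (Fin d) (Fin d) ℝ)
    (hP : Pᵀ * P = 1) (hQ : Qᵀ * Q = 1)
    (σ σ' : Fin d → ℝ) (hσ : ∀ j, 0 ≤ σ j) (hσ' : ∀ j, 0 ≤ σ' j)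
    (p : ℝ) (hp : 0 ≤ p) :
    (∑ j, (σ j ^ (p+1) + σ' j ^ (p+1)))
      - ∑ i, ∑ j, (σ j ^ p * σ' i + σ j * σ' i ^ p) * P i j * Q i j =
    (1/2) * ∑ i, ∑ j,
      ((σ j ^ p - σ' i ^ p) * (σ j - σ' i) * ((P i j) ^ 2 + (Q i j) ^ 2)
        + (σ j ^ p * σ' i + σ j * σ' i ^ p) * (P i j - Q i j) ^ 2) :=
  orthogonal_sum_identity_general d P Q hP hQ σ σ' p hp
end

section
/- Let s ≥ 0 be a real number, let ε > 0, and set c := (2s+1)·((2s+1)/(ε(2s+3)))^s. Then for all real numbers σ, σ̃ ≥ 0: (σ^{2s+1} − σ̃^{2s+1})(σ − σ̃) ≤ ε·(σ^{2s+3} − σ̃^{2s+3})(σ − σ̃) + c·(σ − σ̃)². -/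
open Real Set

-- pointwise key bound
lemma key_bound (s : ℝ) (hs : 0 ≤ s) (ε : ℝ) (hε : 0 < ε)
    (c : ℝ) (hc : c = (2*s+1) * ((2*s+1)/(ε*(2*s+3))) ^ s)
    (x : ℝ) (hx : 0 ≤ x) :
    (2*s+1) * x ^ (2*s) ≤ ε * (2*s+3) * x ^ (2*s+2) + c := by
  set A : ℝ := (2*s+1)/(ε*(2*s+3)) with hA
  have hApos : 0 < A := by positivity
  have hc0 : 0 ≤ c := by rw [hc]; positivity
  have hx2s : x ^ (2*s) = (x ^ (2:ℝ)) ^ s := Real.rpow_mul hx 2 s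
  have hsplit : x ^ (2*s+2) = x ^ (2*s) * x ^ (2:ℝ) := by
    rw [← Real.rpow_add' hx (by positivity)]
  rcases le_or_gt (x ^ (2:ℝ)) A with h | h
  · have h1 : (x ^ (2:ℝ)) ^ s ≤ A ^ s :=
      Real.rpow_le_rpow (Real.rpow_nonneg hx 2) h hs
    have h2 : (2*s+1) * x ^ (2*s) ≤ c := by
      rw [hc, hx2s]
      have : (0:ℝ) ≤ 2*s+1 := by linarith
      nlinarith
    have h3 : 0 ≤ ε * (2*s+3) * x ^ (2*s+2) := by positivity
    linarith
  · have hxp : 0 ≤ x ^ (2*s) := Real.rpow_nonneg hx _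
    have h1 : (2*s+1) * x ^ (2*s) ≤ ε * (2*s+3) * x ^ (2*s+2) := by
      rw [hsplit]
      have hAe : ε * (2*s+3) * A = 2*s+1 := by
        rw [hA]; field_simp [(by linarith : (2*s+3:ℝ) ≠ 0), hε.ne']
      nlinarith [mul_le_mul_of_nonneg_left h.le (mul_nonneg (mul_nonneg hε.le (by linarith : (0:ℝ) ≤ 2*s+3)) hxp)]
    linarith

lemma mono_aux (s : ℝ) (hs : 0 ≤ s) (ε : ℝ) (hε : 0 < ε)
    (c : ℝ) (hc : c = (2*s+1) * ((2*s+1)/(ε*(2*s+3))) ^ s) :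
    MonotoneOn (fun x : ℝ => ε * x ^ (2*s+3) + c * x - x ^ (2*s+1)) (Ici 0) := by
  apply monotoneOn_of_deriv_nonneg (convex_Ici 0)
  · apply ContinuousOn.sub
    · apply ContinuousOn.add
      · exact (continuousOn_const.mul (fun x _ =>
          (Real.continuousAt_rpow_const x _ (Or.inr (by linarith))).continuousWithinAt))
      · exact continuousOn_const.mul continuousOn_id
    · exact fun x _ => (Real.continuousAt_rpow_const x _ (Or.inr (by linarith))).continuousWithinAt
  · intro x hx
    rw [interior_Ici] at hx
    have hx0 : x ≠ 0 := ne_of_gt hx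
    exact (((Real.hasDerivAt_rpow_const (Or.inl hx0)).const_mul ε).add
      ((hasDerivAt_id x).const_mul c)).sub (Real.hasDerivAt_rpow_const (Or.inl hx0))
      |>.differentiableAt.differentiableWithinAt
  · intro x hx
    rw [interior_Ici] at hx
    have hx0 : x ≠ 0 := ne_of_gt hx
    have hd : HasDerivAt (fun x : ℝ => ε * x ^ (2*s+3) + c * x - x ^ (2*s+1))
        (ε * ((2*s+3) * x ^ (2*s+3-1)) + c * 1 - (2*s+1) * x ^ (2*s+1-1)) x :=
      (((Real.hasDerivAt_rpow_const (Or.inl hx0)).const_mul ε).add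
        ((hasDerivAt_id x).const_mul c)).sub (Real.hasDerivAt_rpow_const (Or.inl hx0))
    rw [hd.deriv]
    have := key_bound s hs ε hε c hc x hx.le
    have e1 : 2*s+3-1 = 2*s+2 := by ring
    have e2 : 2*s+1-1 = 2*s := by ring
    rw [e1, e2]
    linarith

/-- The scalar interpolation inequality \eqref{monotfin2a}. -/
theorem scalar_interpolation_diag
    (s : ℝ) (hs : 0 ≤ s) (ε : ℝ) (hε : 0 < ε)
    (c : ℝ) (hc : c = (2*s+1) * ((2*s+1)/(ε*(2*s+3))) ^ s)
    (σ σ' : ℝ) (hσ : 0 ≤ σ) (hσ' : 0 ≤ σ') :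
    (σ ^ (2*s+1) - σ' ^ (2*s+1)) * (σ - σ') ≤
      ε * (σ ^ (2*s+3) - σ' ^ (2*s+3)) * (σ - σ') + c * (σ - σ') ^ 2 := by
  have M := mono_aux s hs ε hε c hc
  rcases le_total σ' σ with h | h
  · have := M (mem_Ici.2 hσ') (mem_Ici.2 hσ) h
    simp only at this
    nlinarith [sub_nonneg.2 h]
  · have := M (mem_Ici.2 hσ) (mem_Ici.2 hσ') h
    simp only at this
    nlinarith [sub_nonneg.2 h]
end

section
/- Let d ≥ 1 and let n be a natural number. Then for all real d×d matrices A and C: ((A·Aᵀ)^n·A − (C·Cᵀ)^n·C) : (A − C) ≥ 0; in particular (n = 1), the matrix function A ↦ A·Aᵀ·A is monotone with respect to the Frobenius inner product. -/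
open Matrix BigOperators

namespace MonoAux

variable {d : ℕ}

open scoped MatrixOrder

abbrev M (d : ℕ) := Matrix (Fin d) (Fin d) ℝ

lemma transpose_of_psd {P : M d} (hP : P.PosSemidef) : Pᵀ = P := by
  have := hP.1
  rwa [Matrix.IsHermitian, Matrix.conjTranspose_eq_transpose_of_trivial] at this

lemma tr_self_nonneg (N : M d) : 0 ≤ (Nᵀ * N).trace := by
  rw [Matrix.trace]
  refine Finset.sum_nonneg fun j _ => ?_
  rw [Matrix.diag_apply, Matrix.mul_apply]
  exact Finset.sum_nonneg fun i _ => by simpa [Matrix.transpose_apply] using mul_self_nonneg (N i j)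

lemma L1 {P Q D : M d} (hP : P.PosSemidef) (hQ : Q.PosSemidef) (hD : Dᵀ = D) :
    0 ≤ (P * D * Q * D).trace := by
  classical
  set S := CFC.sqrt P with hS
  set T := CFC.sqrt Q with hT
  have hSS : S * S = P := CFC.sqrt_mul_sqrt_self P hP.nonneg
  have hTT : T * T = Q := CFC.sqrt_mul_sqrt_self Q hQ.nonneg
  have hSt : Sᵀ = S := transpose_of_psd (CFC.sqrt_nonneg P).posSemidef
  have hTt : Tᵀ = T := transpose_of_psd (CFC.sqrt_nonneg Q).posSemidef
  have e1 : (T * D * S)ᵀ * (T * D * S) = S * D * (Q * D) * S := by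
    rw [Matrix.transpose_mul, Matrix.transpose_mul, hSt, hTt, hD, ← hTT]
    simp [Matrix.mul_assoc]
  have e2 : S * (S * D * (Q * D)) = P * D * Q * D := by
    rw [← hSS]; simp [Matrix.mul_assoc]
  have key : ((T * D * S)ᵀ * (T * D * S)).trace = (P * D * Q * D).trace := by
    rw [e1, Matrix.trace_mul_comm (S * D * (Q * D)) S, e2]
  rw [← key]
  exact tr_self_nonneg _

lemma tel (X Y : M d) (m : ℕ) :
    X ^ m - Y ^ m = ∑ j ∈ Finset.range m, X ^ j * (X - Y) * Y ^ (m - 1 - j) := by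
  induction m with
  | zero => simp
  | succ m ih =>
    rw [Finset.sum_range_succ]
    have hlast : X ^ m * (X - Y) * Y ^ (m + 1 - 1 - m) = X ^ (m + 1) - X ^ m * Y := by
      simp [mul_sub, pow_succ]
    have hrest : ∀ j ∈ Finset.range m,
        X ^ j * (X - Y) * Y ^ (m + 1 - 1 - j) = (X ^ j * (X - Y) * Y ^ (m - 1 - j)) * Y := by
      intro j hj
      rw [Finset.mem_range] at hj
      have : m + 1 - 1 - j = (m - 1 - j) + 1 := by omega
      rw [this, pow_succ, ← Matrix.mul_assoc]
    rw [Finset.sum_congr rfl hrest, ← Finset.sum_mul, ← ih, hlast]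
    rw [sub_mul, pow_succ Y]
    abel

lemma L2 {X Y : M d} (hX : X.PosSemidef) (hY : Y.PosSemidef) (m : ℕ) :
    0 ≤ ((X ^ m - Y ^ m) * (X - Y)).trace := by
  rw [tel X Y m, Finset.sum_mul, Matrix.trace_sum]
  refine Finset.sum_nonneg fun j _ => ?_
  have hD : (X - Y)ᵀ = X - Y := by
    rw [Matrix.transpose_sub, transpose_of_psd hX, transpose_of_psd hY]
  exact L1 (hX.pow j) (hY.pow (m - 1 - j)) hD

lemma amgm {Z : M d} (hZ : Z.PosSemidef) (A C : M d) :
    2 * (Aᵀ * Z * C).trace ≤ (Aᵀ * Z * A).trace + (Cᵀ * Z * C).trace := by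
  classical
  set S := CFC.sqrt Z with hS
  have hSS : S * S = Z := CFC.sqrt_mul_sqrt_self Z hZ.nonneg
  have hSt : Sᵀ = S := transpose_of_psd (CFC.sqrt_nonneg Z).posSemidef
  have h0 : 0 ≤ ((S * A - S * C)ᵀ * (S * A - S * C)).trace := tr_self_nonneg _
  have expand : (S * A - S * C)ᵀ * (S * A - S * C)
      = Aᵀ * Z * A - Aᵀ * Z * C - Cᵀ * Z * A + Cᵀ * Z * C := by
    rw [Matrix.transpose_sub, Matrix.transpose_mul, Matrix.transpose_mul, hSt]
    rw [Matrix.sub_mul, Matrix.mul_sub, Matrix.mul_sub, ← hSS]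
    simp only [Matrix.mul_assoc]
    abel
  have hsym : (Cᵀ * Z * A).trace = (Aᵀ * Z * C).trace := by
    rw [← Matrix.trace_transpose (Cᵀ * Z * A)]
    rw [Matrix.transpose_mul, Matrix.transpose_mul, Matrix.transpose_transpose,
      transpose_of_psd hZ, Matrix.mul_assoc]
  rw [expand] at h0
  simp only [Matrix.trace_add, Matrix.trace_sub, hsym] at h0
  linarith

end MonoAux

/-- Monotonicity of the matrix function `A ↦ (A Aᵀ)^n A` with respect to the
Frobenius inner product. -/
theorem monotone_AAT_pow
    (d : ℕ) (hd : 1 ≤ d) (n : ℕ)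
    (A C : Matrix (Fin d) (Fin d) ℝ) :
    0 ≤ ∑ i, ∑ j, ((A * Aᵀ) ^ n * A - (C * Cᵀ) ^ n * C) i j * (A - C) i j := by
  classical
  set X := A * Aᵀ with hXdef
  set Y := C * Cᵀ with hYdef
  have hX : X.PosSemidef := by
    simpa [hXdef, Matrix.conjTranspose_eq_transpose_of_trivial] using
      Matrix.posSemidef_self_mul_conjTranspose A
  have hY : Y.PosSemidef := by
    simpa [hYdef, Matrix.conjTranspose_eq_transpose_of_trivial] using
      Matrix.posSemidef_self_mul_conjTranspose C
  -- rewrite the double sum as a trace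
  have hsum : ∑ i, ∑ j, (X ^ n * A - Y ^ n * C) i j * (A - C) i j
      = ((X ^ n * A - Y ^ n * C)ᵀ * (A - C)).trace := by
    rw [Matrix.trace]
    rw [Finset.sum_comm]
    refine Finset.sum_congr rfl fun j _ => ?_
    rw [Matrix.diag_apply, Matrix.mul_apply]
    exact Finset.sum_congr rfl fun i _ => by rw [Matrix.transpose_apply]
  rw [hsum]
  have hXt : (X ^ n)ᵀ = X ^ n := MonoAux.transpose_of_psd (hX.pow n)
  have hYt : (Y ^ n)ᵀ = Y ^ n := MonoAux.transpose_of_psd (hY.pow n)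
  have expand : (X ^ n * A - Y ^ n * C)ᵀ * (A - C)
      = Aᵀ * X ^ n * A - Aᵀ * X ^ n * C - (Cᵀ * Y ^ n * A - Cᵀ * Y ^ n * C) := by
    rw [Matrix.transpose_sub, Matrix.transpose_mul, Matrix.transpose_mul, hXt, hYt]
    rw [Matrix.sub_mul, Matrix.mul_sub, Matrix.mul_sub]
  rw [expand]
  simp only [Matrix.trace_sub]
  have h1 : 2 * (Aᵀ * X ^ n * C).trace ≤ (Aᵀ * X ^ n * A).trace + (Cᵀ * X ^ n * C).trace :=
    MonoAux.amgm (hX.pow n) A C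
  have h2 : 2 * (Cᵀ * Y ^ n * A).trace ≤ (Cᵀ * Y ^ n * C).trace + (Aᵀ * Y ^ n * A).trace :=
    MonoAux.amgm (hY.pow n) C A
  -- identify traces with powers of X, Y
  have tA : (Aᵀ * X ^ n * A).trace = (X ^ n * X).trace := by
    rw [Matrix.trace_mul_comm (Aᵀ * X ^ n) A, ← Matrix.mul_assoc, ← hXdef, Matrix.trace_mul_comm]
  have tC : (Cᵀ * Y ^ n * C).trace = (Y ^ n * Y).trace := by
    rw [Matrix.trace_mul_comm (Cᵀ * Y ^ n) C, ← Matrix.mul_assoc, ← hYdef, Matrix.trace_mul_comm]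
  have tXY : (Cᵀ * X ^ n * C).trace = (X ^ n * Y).trace := by
    rw [Matrix.trace_mul_comm (Cᵀ * X ^ n) C, ← Matrix.mul_assoc, ← hYdef, Matrix.trace_mul_comm]
  have tYX : (Aᵀ * Y ^ n * A).trace = (Y ^ n * X).trace := by
    rw [Matrix.trace_mul_comm (Aᵀ * Y ^ n) A, ← Matrix.mul_assoc, ← hXdef, Matrix.trace_mul_comm]
  have key : 0 ≤ ((X ^ n - Y ^ n) * (X - Y)).trace := MonoAux.L2 hX hY n
  have expand2 : ((X ^ n - Y ^ n) * (X - Y)).trace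
      = (X ^ n * X).trace - (X ^ n * Y).trace - (Y ^ n * X).trace + (Y ^ n * Y).trace := by
    rw [Matrix.sub_mul, Matrix.mul_sub, Matrix.mul_sub]
    simp only [Matrix.trace_sub]
    ring
  rw [expand2] at key
  linarith [h1, h2, tA, tC, tXY, tYX, key]
end

section
/- Let d ≥ 1, let n be a natural number and let τ > 0. Let F : ℝ → ℝ^{d×d} and G : ℝ → ℝ^{d×d} and suppose F is differentiable with F′(t) = G(t)·F(t) − (1/(2τ))·( (F(t)·F(t)ᵀ)^{1+n} − (F(t)·F(t)ᵀ)^{n} )·F(t) for every t. Then B := F·Fᵀ is differentiable and satisfies B′(t) = G(t)·B(t) + B(t)·G(t)ᵀ − (1/τ)·( B(t)^{2+n} − B(t)^{1+n} ) for every t. (This is the algebraic transfer from the evolution equation for the tensor F to the evolution equation for B = F Fᵀ in the Giesekus-type models, with G playing the role of the velocity gradient along a trajectory.) -/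
open Matrix

/-- Transfer from the evolution equation for `F` to the evolution equation for
`B = F Fᵀ` in the Giesekus-type models (derivatives taken entrywise). -/
theorem evolution_F_to_B
    (d : ℕ) (hd : 1 ≤ d) (n : ℕ) (τ : ℝ) (hτ : 0 < τ)
    (F G : ℝ → Matrix (Fin d) (Fin d) ℝ)
    (hF : ∀ (t : ℝ) (i j : Fin d),
      HasDerivAt (fun t => F t i j)
        ((G t * F t
          - (1/(2*τ)) • (((F t * (F t)ᵀ) ^ (1+n) - (F t * (F t)ᵀ) ^ n) * F t)) i j) t) :
    ∀ (t : ℝ) (i j : Fin d),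
      HasDerivAt (fun t => (F t * (F t)ᵀ) i j)
        ((G t * (F t * (F t)ᵀ) + (F t * (F t)ᵀ) * (G t)ᵀ
          - (1/τ) • ((F t * (F t)ᵀ) ^ (2+n) - (F t * (F t)ᵀ) ^ (1+n))) i j) t := by
  intro t i j
  set c : ℝ := 1/(2*τ) with hc
  set D : Matrix (Fin d) (Fin d) ℝ :=
    G t * F t - c • (((F t * (F t)ᵀ) ^ (1+n) - (F t * (F t)ᵀ) ^ n) * F t) with hDdef
  set B : Matrix (Fin d) (Fin d) ℝ := F t * (F t)ᵀ with hBdef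
  have hBsym : Bᵀ = B := by simp [hBdef, Matrix.transpose_mul]
  have hτc : (1/τ : ℝ) = c + c := by rw [hc]; field_simp; ring
  have e1 : B ^ (1+n) * B = B ^ (2+n) := by
    rw [← pow_succ, show 1+n+1 = 2+n from by omega]
  have e2 : B ^ n * B = B ^ (1+n) := by rw [← pow_succ, show n+1 = 1+n from by omega]
  have e3 : B * B ^ (1+n) = B ^ (2+n) := by
    rw [← pow_succ', show 1+n+1 = 2+n from by omega]
  have e4 : B * B ^ n = B ^ (1+n) := by rw [← pow_succ', show n+1 = 1+n from by omega]
  have key : G t * B + B * (G t)ᵀ - (1/τ) • (B ^ (2+n) - B ^ (1+n))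
      = D * (F t)ᵀ + F t * Dᵀ := by
    have h1 : D * (F t)ᵀ = G t * B - c • (B ^ (2+n) - B ^ (1+n)) := by
      rw [hDdef, Matrix.sub_mul, Matrix.smul_mul, Matrix.mul_assoc, Matrix.mul_assoc,
        ← hBdef, Matrix.sub_mul, e1, e2]
    have hDT : Dᵀ = (F t)ᵀ * (G t)ᵀ - c • ((F t)ᵀ * (B ^ (1+n) - B ^ n)) := by
      rw [hDdef]
      simp [Matrix.transpose_sub, Matrix.transpose_mul, Matrix.transpose_smul,
        Matrix.transpose_pow, hBsym]
    have h2 : F t * Dᵀ = B * (G t)ᵀ - c • (B ^ (2+n) - B ^ (1+n)) := by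
      rw [hDT, Matrix.mul_sub, Matrix.mul_smul, ← Matrix.mul_assoc, ← Matrix.mul_assoc,
        ← hBdef, Matrix.mul_sub, e3, e4]
    rw [h1, h2, hτc, add_smul]
    abel
  rw [key]
  have hterm : ∀ k : Fin d, HasDerivAt (fun t => F t i k * F t j k)
      (D i k * F t j k + F t i k * D j k) t := fun k => (hF t i k).mul (hF t j k)
  have := HasDerivAt.fun_sum (fun k (_ : k ∈ Finset.univ) => hterm k)
  simpa [Matrix.mul_apply, Matrix.transpose_apply, Matrix.add_apply,
    Finset.sum_add_distrib] using this
end
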